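/- Let a > 0 and ϱ ∈ (−1, 0]. Then for every y ∈ ℝ, the rate function is bounded from below as J_X(y; a, ϱ) ≥ 2ay. -/

import Mathlib

open MeasureTheory ProbabilityTheory Filter Real

/-- The variational rate function `I(u,v)`: infimum of `4∫₀¹ f'(z)² dz` over absolutely
continuous `f : [0,1] → ℝ` (written as `f(z) = ∫₀ᶻ g`) with square-integrable derivative `g`,
`f(0) = 0`, `∫₀¹ e^{2 f(z)} dz = u` and `e^{f(1)} = v`. -/
noncomputable def ratefun (u v : ℝ) : ℝ :=
  sInf {r : ℝ | ∃ g : ℝ → ℝ,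
    IntervalIntegrable g volume 0 1 ∧
    IntervalIntegrable (fun z => (g z) ^ 2) volume 0 1 ∧
    (∫ z in (0:ℝ)..(1:ℝ), Real.exp (2 * ∫ t in (0:ℝ)..z, g t)) = u ∧
    Real.exp (∫ t in (0:ℝ)..(1:ℝ), g t) = v ∧
    r = 4 * ∫ z in (0:ℝ)..(1:ℝ), (g z) ^ 2}

/-!
If `f = ∫₀ᶻ g` is admissible for `I(u, v)`, the chain rule for the absolutely continuous function
`e^f` gives `v - 1 = ∫₀¹ g e^f`, and Cauchy–Schwarz against `∫₀¹ e^{2f} = u` yields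
`(v - 1)² ≤ u ∫₀¹ g²`, that is `I(u, v) ≥ 4 (v - 1)² / u`. With this bound the claim reduces to
`2 (v - 1)² / u + a / ((1 - ϱ²) u) · (y + u/2 - ϱ √(2/a) (v - 1))² ≥ 2 a y`, which becomes a sum
of two squares once the denominators are cleared.
-/

open Set

theorem LocallyLipschitz.comp_absolutelyContinuousOnInterval {E Y : Type*}
    [SeminormedAddCommGroup E] [PseudoMetricSpace Y] {φ : E → Y} {f : ℝ → E} {a b : ℝ}
    (hφ : LocallyLipschitz φ) (hf : AbsolutelyContinuousOnInterval f a b) :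
    AbsolutelyContinuousOnInterval (φ ∘ f) a b := by
  have hcpt : IsCompact (f '' uIcc a b) := isCompact_uIcc.image_of_continuousOn hf.continuousOn
  obtain ⟨K, hK⟩ := hφ.locallyLipschitzOn.exists_lipschitzOnWith_of_compact hcpt
  have hlim := Tendsto.const_mul (K : ℝ) (show Tendsto _ _ _ from hf)
  rw [mul_zero] at hlim
  refine squeeze_zero' (Eventually.of_forall fun E => Finset.sum_nonneg fun i _ => dist_nonneg)
    ?_ hlim
  filter_upwards [eventually_inf_principal.mpr (Eventually.of_forall fun E hE => hE)] with E hE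
  rw [Finset.mul_sum]
  exact Finset.sum_le_sum fun i hi =>
    hK.dist_le_mul _ (mem_image_of_mem f (hE.1 i hi).1) _ (mem_image_of_mem f (hE.1 i hi).2)

theorem intervalIntegral.integral_mul_exp_primitive {g : ℝ → ℝ} {a b : ℝ}
    (hg : IntervalIntegrable g volume a b) :
    ∫ x in a..b, g x * exp (∫ t in a..x, g t) = exp (∫ t in a..b, g t) - 1 := by
  have hac : AbsolutelyContinuousOnInterval (exp ∘ fun x => ∫ t in a..x, g t) a b :=
    contDiff_exp.locallyLipschitz.comp_absolutelyContinuousOnInterval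
      (hg.absolutelyContinuousOnInterval_intervalIntegral left_mem_uIcc)
  have hderiv := hac.integral_deriv_eq_sub
  simp only [Function.comp_apply, intervalIntegral.integral_same, exp_zero] at hderiv
  rw [← hderiv]
  refine intervalIntegral.integral_congr_ae ?_
  filter_upwards [hg.ae_hasDerivAt_integral] with x hx hxab
  have := (hx (uIoc_subset_uIcc hxab) a left_mem_uIcc).exp.deriv
  rw [Function.comp_def, this, mul_comm]

theorem intervalIntegral.integral_mul_sq_le_sq_mul_sq {f h : ℝ → ℝ} {a b : ℝ} (hab : a ≤ b)
    (hf : IntervalIntegrable (fun x => f x ^ 2) volume a b)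
    (hh : IntervalIntegrable (fun x => h x ^ 2) volume a b)
    (hfh : IntervalIntegrable (fun x => f x * h x) volume a b) :
    (∫ x in a..b, f x * h x) ^ 2 ≤ (∫ x in a..b, f x ^ 2) * ∫ x in a..b, h x ^ 2 := by
  have hdisc := discrim_le_zero (a := ∫ x in a..b, h x ^ 2) (b := -2 * ∫ x in a..b, f x * h x)
    (c := ∫ x in a..b, f x ^ 2) fun s => by
      have hsq : ∫ x in a..b, (f x - s * h x) ^ 2
          = ∫ x in a..b, f x ^ 2 + -(2 * s) * (f x * h x) + s ^ 2 * h x ^ 2 :=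
        integral_congr fun x _ => by ring
      have : 0 ≤ ∫ x in a..b, (f x - s * h x) ^ 2 :=
        integral_nonneg hab fun x _ => sq_nonneg _
      rw [hsq, integral_add (hf.add (hfh.const_mul _)) (hh.const_mul _),
        integral_add hf (hfh.const_mul _), integral_const_mul, integral_const_mul] at this
      linarith
  rw [discrim] at hdisc
  nlinarith

theorem integral_exp_neg_mul {c : ℝ} (hc : c ≠ 0) :
    ∫ z in (0 : ℝ)..1, exp (-(c * z)) = (1 - exp (-c)) / c := by
  have := intervalIntegral.integral_comp_mul_left (a := 0) (b := 1) (fun x => exp (-x)) hc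
  simp only [mul_zero, mul_one, intervalIntegral.integral_comp_neg, neg_zero, integral_exp,
    exp_zero, smul_eq_mul] at this
  rw [this, inv_mul_eq_div]

/-- A positive path from `1` to `v` on `[0, 1]` whose energy `∫₀¹ h²` runs through all of
`(0, ∞)` as `γ` does: it is `O(1/γ)` for `γ → ∞` and at least `-γ/6`. Taking `log h` as `f`
shows that the set whose infimum is `ratefun u v` is nonempty, without which `sInf` would be the
junk value `0`. -/
noncomputable def bridgeProfile (v γ z : ℝ) : ℝ :=
  (1 - z) * exp (-(γ * z)) + z * v * exp (-(γ * (1 - z)))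

namespace bridgeProfile

@[simp] theorem apply_zero (v γ : ℝ) : bridgeProfile v γ 0 = 1 := by simp [bridgeProfile]

@[simp] theorem apply_one (v γ : ℝ) : bridgeProfile v γ 1 = v := by simp [bridgeProfile]

theorem contDiff (v γ : ℝ) : ContDiff ℝ 1 (bridgeProfile v γ) := by
  unfold bridgeProfile; fun_prop

theorem pos {v : ℝ} (hv : 0 < v) (γ : ℝ) {z : ℝ} (hz : z ∈ Icc (0 : ℝ) 1) :
    0 < bridgeProfile v γ z := by
  obtain ⟨hz0, hz1⟩ := hz
  rcases hz1.lt_or_eq with hz1 | rfl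
  · have : 0 < (1 - z) * exp (-(γ * z)) := by have := sub_pos.2 hz1; positivity
    unfold bridgeProfile; positivity
  · simpa using hv

theorem continuous_integral_sq (v : ℝ) :
    Continuous fun γ => ∫ z in (0 : ℝ)..1, bridgeProfile v γ z ^ 2 := by
  apply intervalIntegral.continuous_parametric_intervalIntegral_of_continuous'
  unfold bridgeProfile Function.uncurry; fun_prop

theorem sq_le {v : ℝ} (hv : 0 ≤ v) (γ : ℝ) {z : ℝ} (hz : z ∈ Icc (0 : ℝ) 1) :
    bridgeProfile v γ z ^ 2 ≤ 2 * exp (-(2 * γ * z)) + 2 * v ^ 2 * exp (-(2 * γ * (1 - z))) := by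
  obtain ⟨hz0, hz1⟩ := hz
  set A := exp (-(γ * z))
  set B := exp (-(γ * (1 - z)))
  have hA : (1 - z) * A ≤ A := by nlinarith [exp_pos (-(γ * z))]
  have hB : z * v * B ≤ v * B := by nlinarith [mul_nonneg hv (exp_pos (-(γ * (1 - z)))).le]
  have hA0 : 0 ≤ (1 - z) * A := by have := sub_nonneg.2 hz1; positivity
  have hB0 : 0 ≤ z * v * B := by positivity
  have hA2 : exp (-(2 * γ * z)) = A ^ 2 := by rw [← exp_nat_mul]; ring_nf
  have hB2 : exp (-(2 * γ * (1 - z))) = B ^ 2 := by rw [← exp_nat_mul]; ring_nf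
  rw [hA2, hB2, bridgeProfile]
  nlinarith [sq_nonneg (A - v * B)]

theorem mul_le_sq {v : ℝ} (hv : 0 ≤ v) (γ : ℝ) {z : ℝ} (hz : z ∈ Icc (0 : ℝ) 1) :
    -(2 * γ) * (z * (1 - z) ^ 2) ≤ bridgeProfile v γ z ^ 2 := by
  obtain ⟨hz0, hz1⟩ := hz
  have hexp : -(2 * γ) * z ≤ exp (-(γ * z)) ^ 2 := by
    rw [← exp_nat_mul]
    push_cast
    linarith [add_one_le_exp (2 * -(γ * z))]
  have hB0 : 0 ≤ z * v * exp (-(γ * (1 - z))) := by positivity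
  calc -(2 * γ) * (z * (1 - z) ^ 2) = (-(2 * γ) * z) * (1 - z) ^ 2 := by ring
    _ ≤ exp (-(γ * z)) ^ 2 * (1 - z) ^ 2 := by gcongr
    _ = ((1 - z) * exp (-(γ * z))) ^ 2 := by ring
    _ ≤ bridgeProfile v γ z ^ 2 := by
      have := sub_nonneg.2 hz1
      unfold bridgeProfile; gcongr; linarith

theorem integral_sq_le {v γ : ℝ} (hv : 0 ≤ v) (hγ : 0 < γ) :
    ∫ z in (0 : ℝ)..1, bridgeProfile v γ z ^ 2 ≤ (1 + v ^ 2) / γ := by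
  have hexp := integral_exp_neg_mul (c := 2 * γ) (by positivity)
  have hexp' : ∫ z in (0 : ℝ)..1, exp (-(2 * γ * (1 - z))) = (1 - exp (-(2 * γ))) / (2 * γ) := by
    rw [intervalIntegral.integral_comp_sub_left (fun z => exp (-(2 * γ * z))), sub_self, sub_zero,
      hexp]
  calc ∫ z in (0 : ℝ)..1, bridgeProfile v γ z ^ 2
      ≤ ∫ z in (0 : ℝ)..1, 2 * exp (-(2 * γ * z)) + 2 * v ^ 2 * exp (-(2 * γ * (1 - z))) := by
        refine intervalIntegral.integral_mono_on zero_le_one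
          (((contDiff v γ).continuous.pow 2).intervalIntegrable _ _) ?_ fun z => sq_le hv γ
        apply Continuous.intervalIntegrable; fun_prop
    _ = (1 + v ^ 2) * (1 - exp (-(2 * γ))) / γ := by
        rw [intervalIntegral.integral_add, intervalIntegral.integral_const_mul,
          intervalIntegral.integral_const_mul, hexp, hexp']
        · field_simp
        all_goals apply Continuous.intervalIntegrable; fun_prop
    _ ≤ (1 + v ^ 2) / γ := by
        gcongr
        exact mul_le_of_le_one_right (by positivity) (by linarith [exp_pos (-(2 * γ))])

theorem le_integral_sq {v : ℝ} (hv : 0 ≤ v) (γ : ℝ) :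
    -γ / 6 ≤ ∫ z in (0 : ℝ)..1, bridgeProfile v γ z ^ 2 := by
  have hpoly : ∫ z in (0 : ℝ)..1, z * (1 - z) ^ 2 = 1 / 12 := by
    have : ∀ z : ℝ, z * (1 - z) ^ 2 = z ^ 1 - 2 * z ^ 2 + z ^ 3 := fun z => by ring
    simp only [this]
    rw [intervalIntegral.integral_add, intervalIntegral.integral_sub,
      intervalIntegral.integral_const_mul] <;> norm_num [integral_pow]
  calc -γ / 6 = ∫ z in (0 : ℝ)..1, -(2 * γ) * (z * (1 - z) ^ 2) := by
        rw [intervalIntegral.integral_const_mul, hpoly]; ring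
    _ ≤ _ := by
        refine intervalIntegral.integral_mono_on zero_le_one ?_
          (((contDiff v γ).continuous.pow 2).intervalIntegrable _ _) fun z => mul_le_sq hv γ
        apply Continuous.intervalIntegrable; fun_prop

theorem exists_integral_sq_eq {u v : ℝ} (hu : 0 < u) (hv : 0 ≤ v) :
    ∃ γ, ∫ z in (0 : ℝ)..1, bridgeProfile v γ z ^ 2 = u := by
  have hγ₁ : 0 < (1 + v ^ 2) / u := by positivity
  obtain ⟨γ, -, hγ⟩ := intermediate_value_Icc' (by linarith : -(6 * u) ≤ (1 + v ^ 2) / u)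
    (continuous_integral_sq v).continuousOn
    (show u ∈ Icc _ _ from ⟨(integral_sq_le hv hγ₁).trans_eq (by field_simp),
      (le_integral_sq hv _).trans_eq' (by ring)⟩)
  exact ⟨γ, hγ⟩

end bridgeProfile

theorem exists_admissible_of_contDiff_pos {h : ℝ → ℝ} (hh : ContDiff ℝ 1 h)
    (hpos : ∀ z ∈ Icc (0 : ℝ) 1, 0 < h z) (h0 : h 0 = 1) :
    ∃ g : ℝ → ℝ, IntervalIntegrable g volume 0 1 ∧
      IntervalIntegrable (fun z => g z ^ 2) volume 0 1 ∧
      ∫ z in (0 : ℝ)..1, exp (2 * ∫ t in (0 : ℝ)..z, g t) = ∫ z in (0 : ℝ)..1, h z ^ 2 ∧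
      exp (∫ t in (0 : ℝ)..1, g t) = h 1 := by
  have hcont : ContinuousOn (logDeriv h) (Icc 0 1) :=
    (hh.continuous_deriv le_rfl).continuousOn.div hh.continuous.continuousOn
      fun z hz => (hpos z hz).ne'
  have hint : ∀ x ∈ Icc (0 : ℝ) 1, IntervalIntegrable (logDeriv h) volume 0 x := fun x hx =>
    (hcont.mono (by rw [uIcc_of_le hx.1]; exact Icc_subset_Icc le_rfl hx.2)).intervalIntegrable
  have hprim : ∀ x ∈ Icc (0 : ℝ) 1, ∫ t in (0 : ℝ)..x, logDeriv h t = log (h x) := by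
    intro x hx
    rw [intervalIntegral.integral_eq_sub_of_hasDerivAt (f := fun z => log (h z)) _ (hint x hx),
      h0, log_one, sub_zero]
    intro t ht
    rw [uIcc_of_le hx.1] at ht
    rw [logDeriv_apply]
    exact ((hh.differentiable one_ne_zero t).hasDerivAt.log (hpos t ⟨ht.1, ht.2.trans hx.2⟩).ne')
  refine ⟨logDeriv h, hint 1 ⟨zero_le_one, le_rfl⟩,
    ((hcont.pow 2).mono (uIcc_of_le zero_le_one).subset).intervalIntegrable, ?_, ?_⟩
  · refine intervalIntegral.integral_congr fun z hz => ?_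
    rw [uIcc_of_le zero_le_one] at hz
    rw [hprim z hz, two_mul, exp_add, exp_log (hpos z hz), sq]
  · rw [hprim 1 ⟨zero_le_one, le_rfl⟩, exp_log (hpos 1 ⟨zero_le_one, le_rfl⟩)]

theorem sq_exp_integral_sub_one_le {g : ℝ → ℝ} {a b : ℝ} (hab : a ≤ b)
    (hg : IntervalIntegrable g volume a b)
    (hg2 : IntervalIntegrable (fun x => g x ^ 2) volume a b) :
    (exp (∫ t in a..b, g t) - 1) ^ 2
      ≤ (∫ x in a..b, g x ^ 2) * ∫ x in a..b, exp (2 * ∫ t in a..x, g t) := by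
  have hE : ContinuousOn (fun x => exp (∫ t in a..x, g t)) (uIcc a b) :=
    continuous_exp.comp_continuousOn
      (hg.absolutelyContinuousOnInterval_intervalIntegral left_mem_uIcc).continuousOn
  have hsq : ∀ x, exp (2 * ∫ t in a..x, g t) = exp (∫ t in a..x, g t) ^ 2 := fun x => by
    rw [← exp_nat_mul]; norm_num
  rw [← intervalIntegral.integral_mul_exp_primitive hg]
  simp only [hsq]
  exact intervalIntegral.integral_mul_sq_le_sq_mul_sq hab hg2 (hE.pow 2).intervalIntegrable
    (hg.mul_continuousOn hE)

theorem four_mul_sq_sub_one_div_le_ratefun {u v : ℝ} (hu : 0 < u) (hv : 0 < v) :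
    4 * (v - 1) ^ 2 / u ≤ ratefun u v := by
  apply le_csInf
  · obtain ⟨γ, hγ⟩ := bridgeProfile.exists_integral_sq_eq hu hv.le
    obtain ⟨g, hg, hg2, hgu, hgv⟩ := exists_admissible_of_contDiff_pos (bridgeProfile.contDiff v γ)
      (fun z hz => bridgeProfile.pos hv γ hz) (bridgeProfile.apply_zero v γ)
    exact ⟨_, g, hg, hg2, hgu.trans hγ, hgv.trans (bridgeProfile.apply_one v γ), rfl⟩
  · rintro r ⟨g, hg, hg2, rfl, rfl, rfl⟩
    have := sq_exp_integral_sub_one_le zero_le_one hg hg2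
    rw [div_le_iff₀ hu]
    linarith

theorem two_mul_mul_le_of_sq_lt_one {a ϱ u v y : ℝ} (ha : 0 < a) (hϱ : ϱ ^ 2 < 1) (hu : 0 < u) :
    2 * a * y ≤ 2 * (v - 1) ^ 2 / u
      + a / ((1 - ϱ ^ 2) * u) * (y + u / 2 - ϱ * √(2 / a) * (v - 1)) ^ 2 := by
  have hab : a * √(2 / a) ^ 2 = 2 := by rw [sq_sqrt (by positivity)]; field_simp
  have hq : 0 < 1 - ϱ ^ 2 := by linarith
  have hsos : 2 * (v - 1) ^ 2 / u
      + a / ((1 - ϱ ^ 2) * u) * (y + u / 2 - ϱ * √(2 / a) * (v - 1)) ^ 2 - 2 * a * y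
      = ((2 * (v - 1) - a * √(2 / a) * ϱ * (y + u / 2)) ^ 2
          + 2 * a * (1 - ϱ ^ 2) * (y - u / 2) ^ 2) / (2 * (1 - ϱ ^ 2) * u) := by
    field_simp
    linear_combination (4 * ϱ ^ 2 * (2 * (v - 1) ^ 2 - a * (y + u / 2) ^ 2)) * hab
  have : 0 ≤ ((2 * (v - 1) - a * √(2 / a) * ϱ * (y + u / 2)) ^ 2
      + 2 * a * (1 - ϱ ^ 2) * (y - u / 2) ^ 2) / (2 * (1 - ϱ ^ 2) * u) := by positivity
  linarith

/-- Lower bound on the rate function: for `a > 0` and `ϱ ∈ (−1,0]`,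
`J_X(y; a, ϱ) ≥ 2ay` for every `y`. -/
theorem ratefun_JX_lower_bound (a ϱ : ℝ) (ha : 0 < a) (hϱ : ϱ ∈ Set.Ioc (-1 : ℝ) 0)
    (JX : ℝ → ℝ)
    (hJX : ∀ y : ℝ, JX y =
      sInf {r : ℝ | ∃ u v : ℝ, 0 < u ∧ 0 < v ∧
        r = (1 / 2) * ratefun u v
          + (a / ((1 - ϱ ^ 2) * u)) * (y + u / 2 - ϱ * Real.sqrt (2 / a) * (v - 1)) ^ 2}) :
    ∀ y : ℝ, 2 * a * y ≤ JX y := by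
  intro y
  rw [hJX y]
  refine le_csInf ⟨_, 1, 1, one_pos, one_pos, rfl⟩ ?_
  rintro r ⟨u, v, hu, hv, rfl⟩
  have hϱ2 : ϱ ^ 2 < 1 := by nlinarith [hϱ.1, hϱ.2]
  calc 2 * a * y ≤ 2 * (v - 1) ^ 2 / u
        + a / ((1 - ϱ ^ 2) * u) * (y + u / 2 - ϱ * √(2 / a) * (v - 1)) ^ 2 :=
        two_mul_mul_le_of_sq_lt_one ha hϱ2 hu
    _ ≤ _ := by
        gcongr
        linarith [four_mul_sq_sub_one_div_le_ratefun hu hv,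
          show 4 * (v - 1) ^ 2 / u = 2 * (2 * (v - 1) ^ 2 / u) by ring]
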